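/- arXiv:2310.00027 — 2 statements merged into one kernel-verified Lean document; each statement's English description precedes it below -/
import Mathlib

section
/- Let Σ be a d×d positive definite matrix with eigenvalues λ₁ ≤ ⋯ ≤ λ_d (λ_min = λ₁, λ_max = λ_d), and let μ ∈ ℝ^d, μ ≠ 0. Write μ̂ = μ/‖μ‖₂ = Σᵢ aᵢ uᵢ in the eigenbasis {uᵢ} of Σ, with Σᵢ aᵢ² = 1. Then μ̂ᵀ(Σ - μμᵀ/(μᵀΣ⁻¹μ))μ̂ = [Σ_{i,j} aᵢ²aⱼ²(λᵢ-λⱼ)² ∏_{k≠i,j} λ_k] / [2 Σᵢ aᵢ² ∏_{j≠i} λⱼ]. -/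
/-!
In the orthonormal eigenbasis, with `wᵢ = aᵢ²`, the left side is `A - 1 / T` where
`A = ∑ wᵢ lᵢ` and `T = ∑ wᵢ / lᵢ = μ̂ᵀ Σ⁻¹ μ̂`; the factor `‖μ‖²` cancels in the quotient.
With `P = ∏ lₖ` one has `∏_{k ≠ i, j} lₖ = P / (lᵢ lⱼ)` for `i ≠ j`, so the numerator on the right
is `2 P (A T - (∑ wᵢ)²)` and the denominator `2 P T`.
-/

open Matrix Finset

section PairwiseIdentity

variable {ι K : Type*} [Fintype ι] [DecidableEq ι] [Field K]

theorem prod_sdiff_singleton_mul (l : ι → K) (i : ι) :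
    (∏ k ∈ univ \ {i}, l k) * l i = ∏ k, l k := by
  simpa using prod_sdiff (f := l) (subset_univ {i})

theorem prod_sdiff_pair_mul (l : ι → K) {i j : ι} (hij : i ≠ j) :
    (∏ k ∈ univ \ {i, j}, l k) * (l i * l j) = ∏ k, l k := by
  rw [← prod_pair hij, prod_sdiff (subset_univ _)]

theorem sum_mul_prod_sdiff_singleton (w l : ι → K) (hl : ∀ i, l i ≠ 0) :
    ∑ i, w i * ∏ j ∈ univ \ {i}, l j = (∏ i, l i) * ∑ i, w i * (l i)⁻¹ := by
  rw [mul_sum]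
  refine sum_congr rfl fun i _ => ?_
  rw [← prod_sdiff_singleton_mul l i]
  field_simp [hl i]

theorem mul_mul_sq_sub_mul_prod_sdiff_pair (w l : ι → K) (hl : ∀ i, l i ≠ 0) (i j : ι) :
    w i * w j * (l i - l j) ^ 2 * ∏ k ∈ univ \ {i, j}, l k
      = (∏ k, l k) * (w i * l i * (w j * (l j)⁻¹) + w i * (l i)⁻¹ * (w j * l j)
          - 2 * (w i * w j)) := by
  by_cases hij : i = j
  · subst hij
    field_simp [hl i]
    ring
  · rw [← prod_sdiff_pair_mul l hij]
    field_simp [hl i, hl j]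
    ring

theorem sum_sum_mul_sq_sub_mul_prod_sdiff_pair (w l : ι → K) (hl : ∀ i, l i ≠ 0) :
    ∑ i, ∑ j, w i * w j * (l i - l j) ^ 2 * ∏ k ∈ univ \ {i, j}, l k
      = 2 * (∏ k, l k) * ((∑ i, w i * l i) * (∑ i, w i * (l i)⁻¹) - (∑ i, w i) ^ 2) := by
  simp only [mul_mul_sq_sub_mul_prod_sdiff_pair w l hl, ← mul_sum, sum_sub_distrib, sum_add_distrib,
    ← sum_mul]
  ring

theorem sum_sum_mul_sq_sub_mul_prod_div_eq [CharZero K] (w l : ι → K) (hl : ∀ i, l i ≠ 0)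
    (hT : ∑ i, w i * (l i)⁻¹ ≠ 0) :
    (∑ i, ∑ j, w i * w j * (l i - l j) ^ 2 * ∏ k ∈ univ \ {i, j}, l k)
        / (2 * ∑ i, w i * ∏ j ∈ univ \ {i}, l j)
      = ∑ i, w i * l i - (∑ i, w i) ^ 2 / ∑ i, w i * (l i)⁻¹ := by
  have hP : ∏ k, l k ≠ 0 := prod_ne_zero_iff.mpr fun i _ => hl i
  rw [sum_sum_mul_sq_sub_mul_prod_sdiff_pair w l hl, sum_mul_prod_sdiff_singleton w l hl]
  generalize ∑ i, w i * (l i)⁻¹ = T at hT ⊢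
  field_simp

end PairwiseIdentity

section Eigenbasis

variable {ι n K : Type*} [Fintype ι] [Fintype n] [Field K]

theorem sum_smul_dotProduct_sum_smul [DecidableEq ι] {u : ι → n → K}
    (horth : ∀ i j, u i ⬝ᵥ u j = if i = j then 1 else 0) (b c : ι → K) :
    (∑ i, b i • u i) ⬝ᵥ (∑ j, c j • u j) = ∑ i, b i * c i := by
  simp [sum_dotProduct, dotProduct_sum, horth, mul_comm]

theorem mulVec_sum_smul_of_eigen {A : Matrix n n K} {u : ι → n → K} {l : ι → K}
    (heig : ∀ i, A *ᵥ u i = l i • u i) (b : ι → K) :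
    A *ᵥ ∑ i, b i • u i = ∑ i, (b i * l i) • u i := by
  simp [mulVec_sum, mulVec_smul, heig, smul_smul]

theorem sum_smul_dotProduct_mulVec_of_eigen [DecidableEq ι] {A : Matrix n n K} {u : ι → n → K}
    {l : ι → K} (horth : ∀ i j, u i ⬝ᵥ u j = if i = j then 1 else 0)
    (heig : ∀ i, A *ᵥ u i = l i • u i) (b : ι → K) :
    (∑ i, b i • u i) ⬝ᵥ A *ᵥ ∑ i, b i • u i = ∑ i, b i ^ 2 * l i := by
  rw [mulVec_sum_smul_of_eigen heig, sum_smul_dotProduct_sum_smul horth]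
  exact sum_congr rfl fun i _ => by ring

theorem inv_mulVec_eq_inv_smul [DecidableEq n] {A : Matrix n n K} (hA : IsUnit A.det) {c : K}
    (hc : c ≠ 0) {v : n → K} (h : A *ᵥ v = c • v) : A⁻¹ *ᵥ v = c⁻¹ • v := by
  have hv : v = c • A⁻¹ *ᵥ v := by
    rw [← mulVec_smul, ← h, mulVec_mulVec, nonsing_inv_mul _ hA, one_mulVec]
  rw [eq_inv_smul_iff₀ hc, ← hv]

theorem Matrix.PosDef.pos_of_mulVec_eq_smul {A : Matrix n n ℝ}
    (hA : A.PosDef) {c : ℝ} {v : n → ℝ} (hv : v ≠ 0) (h : A *ᵥ v = c • v) : 0 < c := by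
  have hpos := hA.dotProduct_mulVec_pos hv
  rw [star_trivial, h, dotProduct_smul, smul_eq_mul] at hpos
  exact pos_of_mul_pos_left hpos (dotProduct_self_star_nonneg v)

theorem sq_dotProduct_smul_div (M : Matrix n n K) (x y : n → K) {c : K} (hc : c ≠ 0) :
    (x ⬝ᵥ c • y) ^ 2 / (c • y ⬝ᵥ M *ᵥ (c • y)) = (x ⬝ᵥ y) ^ 2 / (y ⬝ᵥ M *ᵥ y) := by
  rw [mulVec_smul, dotProduct_smul, dotProduct_smul, smul_dotProduct, smul_eq_mul, smul_eq_mul,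
    smul_eq_mul, mul_pow, ← mul_assoc, ← sq, mul_div_mul_left _ _ (pow_ne_zero 2 hc)]

end Eigenbasis

theorem stmt_4_general (d : ℕ) (S : Matrix (Fin d) (Fin d) ℝ) (hS : S.PosDef)
    (l : Fin d → ℝ)
    (u : Fin d → Fin d → ℝ)
    (heig : ∀ i, S.mulVec (u i) = l i • u i)
    (horth : ∀ i j, u i ⬝ᵥ u j = if i = j then 1 else 0)
    (μ : Fin d → ℝ)
    (a : Fin d → ℝ) (μhat : Fin d → ℝ)
    (hμhat : μhat = (Real.sqrt (μ ⬝ᵥ μ))⁻¹ • μ)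
    (hexp : μhat = ∑ i, a i • u i)
    (ha : ∑ i, (a i) ^ 2 = 1) :
    μhat ⬝ᵥ S.mulVec μhat - (μhat ⬝ᵥ μ) ^ 2 / (μ ⬝ᵥ S⁻¹.mulVec μ)
      = (∑ i, ∑ j, (a i) ^ 2 * (a j) ^ 2 * (l i - l j) ^ 2 * ∏ k ∈ univ \ {i, j}, l k)
        / (2 * ∑ i, (a i) ^ 2 * ∏ j ∈ univ \ {i}, l j) := by
  have hl : ∀ i, l i ≠ 0 := fun i =>
    (hS.pos_of_mulVec_eq_smul (fun h => by simpa [h] using horth i i) (heig i)).ne'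
  have heig_inv : ∀ i, S⁻¹ *ᵥ u i = (l i)⁻¹ • u i := fun i =>
    inv_mulVec_eq_inv_smul hS.det_pos.ne'.isUnit (hl i) (heig i)
  have hunit : μhat ⬝ᵥ μhat = 1 := by
    rw [hexp, sum_smul_dotProduct_sum_smul horth, ← ha]
    simp only [sq]
  have hμhat_ne : μhat ≠ 0 := fun h => by simp [h] at hunit
  set c := Real.sqrt (μ ⬝ᵥ μ)
  have hc : c ≠ 0 := fun h => hμhat_ne (by simp [hμhat, h])
  have hμ : μ = c • μhat := by rw [hμhat, smul_inv_smul₀ hc]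
  have hT : ∑ i, a i ^ 2 * (l i)⁻¹ ≠ 0 := by
    rw [← sum_smul_dotProduct_mulVec_of_eigen horth heig_inv, ← hexp, ← star_trivial μhat]
    exact (hS.inv.dotProduct_mulVec_pos hμhat_ne).ne'
  rw [hμ, sq_dotProduct_smul_div _ _ _ hc, hunit, ← ha, hexp,
    sum_smul_dotProduct_mulVec_of_eigen horth heig,
    sum_smul_dotProduct_mulVec_of_eigen horth heig_inv,
    sum_sum_mul_sq_sub_mul_prod_div_eq _ l hl hT]

/-- For a positive definite Σ with orthonormal eigenbasis (u i) and
eigenvalues l 1 ≤ ⋯ ≤ l d, and μ̂ = μ/‖μ‖₂ = Σᵢ aᵢ uᵢ with Σᵢ aᵢ² = 1,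
μ̂ᵀ(Σ - μμᵀ/(μᵀΣ⁻¹μ))μ̂
  = [Σ_{i,j} aᵢ²aⱼ²(lᵢ-lⱼ)² ∏_{k≠i,j} l_k] / [2 Σᵢ aᵢ² ∏_{j≠i} lⱼ]. -/
theorem stmt_4 (d : ℕ) (S : Matrix (Fin d) (Fin d) ℝ) (hS : S.PosDef)
    (l : Fin d → ℝ) (hmono : Monotone l)
    (u : Fin d → Fin d → ℝ)
    (heig : ∀ i, S.mulVec (u i) = l i • u i)
    (horth : ∀ i j, u i ⬝ᵥ u j = if i = j then 1 else 0)
    (μ : Fin d → ℝ) (hμ : μ ≠ 0)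
    (a : Fin d → ℝ) (μhat : Fin d → ℝ)
    (hμhat : μhat = (Real.sqrt (μ ⬝ᵥ μ))⁻¹ • μ)
    (hexp : μhat = ∑ i, a i • u i)
    (ha : ∑ i, (a i) ^ 2 = 1) :
    μhat ⬝ᵥ S.mulVec μhat - (μhat ⬝ᵥ μ) ^ 2 / (μ ⬝ᵥ S⁻¹.mulVec μ)
      = (∑ i, ∑ j, (a i) ^ 2 * (a j) ^ 2 * (l i - l j) ^ 2 * ∏ k ∈ univ \ {i, j}, l k)
        / (2 * ∑ i, (a i) ^ 2 * ∏ j ∈ univ \ {i}, l j) :=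
  stmt_4_general d S hS l u heig horth μ a μhat hμhat hexp ha
end

section
/- Let φ_γ(x,y;θ) = sup_{z∈ℝ^d} [ℓ(z,y;θ) − γ‖z−x‖₂] with ℓ the 0-1 loss ℓ(z,y;θ) = 1{y⟨θ,z⟩ ≤ 0} and ‖θ‖₂ = 1. Then φ_γ(x,y;θ) = min{1, max{0, 1 − γ·y⟨θ,x⟩}}, the two-sided clipped hinge loss of the margin y⟨θ,x⟩. -/
open RealInnerProductSpace

/-- for a unit vector θ and label y ∈ {±1}, the distributionally robust
surrogate φ_γ(x,y;θ) = sup_z [1{y⟨θ,z⟩ ≤ 0} − γ‖z−x‖₂] equals the two-sided clipped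
hinge loss min{1, max{0, 1 − γ·y⟨θ,x⟩}}. -/
theorem stmt_16 (d : ℕ) (θ x : EuclideanSpace ℝ (Fin d)) (hθ : ‖θ‖ = 1)
    (y : ℝ) (hy : y = 1 ∨ y = -1) (γ : ℝ) (hγ : 0 < γ) :
    (⨆ z : EuclideanSpace ℝ (Fin d),
        ((if y * ⟪θ, z⟫ ≤ 0 then (1 : ℝ) else 0) - γ * ‖z - x‖))
      = min 1 (max 0 (1 - γ * (y * ⟪θ, x⟫))) := by
  set t := y * ⟪θ, x⟫ with ht
  have hy2 : y * y = 1 := by rcases hy with h | h <;> simp [h]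
  have hyabs : |y| = 1 := by rcases hy with h | h <;> simp [h]
  have upper : ∀ z : EuclideanSpace ℝ (Fin d),
      (if y * ⟪θ, z⟫ ≤ 0 then (1 : ℝ) else 0) - γ * ‖z - x‖
        ≤ min 1 (max 0 (1 - γ * t)) := by
    intro z
    have hCS : t - y * ⟪θ, z⟫ ≤ ‖z - x‖ := by
      have h1 : t - y * ⟪θ, z⟫ = y * ⟪θ, x - z⟫ := by
        rw [inner_sub_right]; ring
      calc t - y * ⟪θ, z⟫ = y * ⟪θ, x - z⟫ := h1
        _ ≤ |y * ⟪θ, x - z⟫| := le_abs_self _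
        _ = |⟪θ, x - z⟫| := by rw [abs_mul, hyabs, one_mul]
        _ ≤ ‖θ‖ * ‖x - z‖ := abs_real_inner_le_norm _ _
        _ = ‖z - x‖ := by rw [hθ, one_mul, norm_sub_rev]
    have hnn : (0:ℝ) ≤ ‖z - x‖ := norm_nonneg _
    split_ifs with h
    · refine le_min (by nlinarith) ?_
      have ht' : t ≤ ‖z - x‖ := by linarith
      have : 1 - γ * ‖z - x‖ ≤ 1 - γ * t := by nlinarith
      exact this.trans (le_max_right _ _)
    · refine le_min (by nlinarith) ((by nlinarith : (0:ℝ) - γ * ‖z - x‖ ≤ 0).trans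
        (le_max_left _ _))
  have hbdd : BddAbove (Set.range fun z : EuclideanSpace ℝ (Fin d) =>
      (if y * ⟪θ, z⟫ ≤ 0 then (1 : ℝ) else 0) - γ * ‖z - x‖) := by
    refine ⟨min 1 (max 0 (1 - γ * t)), ?_⟩
    rintro v ⟨z, rfl⟩
    exact upper z
  refine le_antisymm (ciSup_le upper) ?_
  rcases le_or_gt t 0 with h0 | h0
  · have hrhs : min 1 (max 0 (1 - γ * t)) = 1 := by
      have : (1:ℝ) ≤ 1 - γ * t := by nlinarith
      rw [min_eq_left (this.trans (le_max_right 0 _))]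
    rw [hrhs]
    have hval : (if y * ⟪θ, x⟫ ≤ 0 then (1 : ℝ) else 0) - γ * ‖x - x‖ = 1 := by
      rw [if_pos h0]; simp
    calc (1:ℝ) = (if y * ⟪θ, x⟫ ≤ 0 then (1 : ℝ) else 0) - γ * ‖x - x‖ := hval.symm
      _ ≤ _ := le_ciSup hbdd x
  · rcases le_or_gt (γ * t) 1 with h1 | h1
    · have hrhs : min 1 (max 0 (1 - γ * t)) = 1 - γ * t := by
        have h2 : (0:ℝ) ≤ 1 - γ * t := by linarith
        have h3 : (1:ℝ) - γ * t ≤ 1 := by nlinarith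
        rw [max_eq_right h2, min_eq_right h3]
      rw [hrhs]
      set z₀ : EuclideanSpace ℝ (Fin d) := x - (t * y) • θ with hz₀
      have hinner : ⟪θ, z₀⟫ = ⟪θ, x⟫ - t * y := by
        rw [hz₀, inner_sub_right, real_inner_smul_right,
          real_inner_self_eq_norm_sq, hθ]; ring
      have hmargin : y * ⟪θ, z₀⟫ = 0 := by
        rw [hinner]; rw [ht]; nlinarith
      have hnorm : ‖z₀ - x‖ = t := by
        rw [hz₀]
        simp only [sub_sub_cancel_left, norm_neg, norm_smul]
        rw [hθ, mul_one, Real.norm_eq_abs, abs_mul, hyabs, mul_one,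
          abs_of_pos h0]
      have hval : (if y * ⟪θ, z₀⟫ ≤ 0 then (1 : ℝ) else 0) - γ * ‖z₀ - x‖
          = 1 - γ * t := by
        rw [if_pos (le_of_eq hmargin), hnorm]
      calc (1:ℝ) - γ * t = _ := hval.symm
        _ ≤ _ := le_ciSup hbdd z₀
    · have hrhs : min 1 (max 0 (1 - γ * t)) = 0 := by
        have h2 : (1:ℝ) - γ * t ≤ 0 := by linarith
        rw [max_eq_left h2, min_eq_right zero_le_one]
      rw [hrhs]
      have hval : (if y * ⟪θ, x⟫ ≤ 0 then (1 : ℝ) else 0) - γ * ‖x - x‖ = 0 := by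
        rw [if_neg (not_le.mpr h0)]; simp
      calc (0:ℝ) = _ := hval.symm
        _ ≤ _ := le_ciSup hbdd x
end
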